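/- For any complex numbers $a_1,\ldots,a_n$, the average over all sign vectors $\varepsilon \in \{-1,1\}^n$ of $|\sum_{j=1}^n \varepsilon_j a_j|$ is at least $\frac{1}{\sqrt{2}}\big(\sum_{j=1}^n |a_j|^2\big)^{1/2}$. -/

import Mathlib

/-!
Let `F ε = ‖∑ j, ε j • a j‖` on the cube `{-1, 1}ⁿ`. Flipping the `i`-th sign and summing over `i`
gives `(n - 2) • ∑ j, ε j • a j`, so by the triangle inequality `(n - 2) F ≤ ∑ i, F ∘ flipᵢ`.
In the Walsh basis `∑ i, F ∘ flipᵢ` has multiplier `n - 2|S|`, so pairing with `F ≥ 0` gives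
`∑ S, (|S| - 1) F̂(S)² ≤ 0`. As `F` is even, `F̂(S) = 0` when `|S| = 1`, hence
`∑_{S ≠ ∅} F̂(S)² ≤ F̂(∅)²`, which by Parseval reads `𝔼 F² ≤ 2 (𝔼 F)²`. Finally
`𝔼 F² = ∑ j, ‖a j‖²` by orthogonality of the coordinates.
-/

open Finset

namespace BooleanCube

variable {ι : Type*}

def sign (b : Bool) : ℝ := if b then 1 else -1

@[simp] lemma sign_true : sign true = 1 := rfl

@[simp] lemma sign_false : sign false = -1 := rfl

@[simp] lemma sign_not (b : Bool) : sign (!b) = -sign b := by cases b <;> simp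

@[simp] lemma sign_mul_self (b : Bool) : sign b * sign b = 1 := by cases b <;> simp

def flipAll : Equiv.Perm (ι → Bool) :=
  Function.Involutive.toPerm (fun ε j => !ε j) fun ε => by ext; simp

@[simp] lemma flipAll_apply (ε : ι → Bool) (j : ι) : flipAll ε j = !ε j := rfl

def walsh (S : Finset ι) (ε : ι → Bool) : ℝ := ∏ i ∈ S, sign (ε i)

lemma walsh_flipAll (S : Finset ι) (ε : ι → Bool) :
    walsh S (flipAll ε) = (-1) ^ #S * walsh S ε := by
  simp [walsh, ← prod_const, ← prod_mul_distrib]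

section FlipAt

variable [DecidableEq ι]

def flipAt (i : ι) : Equiv.Perm (ι → Bool) :=
  Function.Involutive.toPerm (fun ε => Function.update ε i (!ε i)) fun ε => by
    ext j; by_cases h : j = i <;> simp [h]

lemma flipAt_apply (i : ι) (ε : ι → Bool) : flipAt i ε = Function.update ε i (!ε i) := rfl

@[simp] lemma flipAt_flipAt (i : ι) (ε : ι → Bool) : flipAt i (flipAt i ε) = ε :=
  (flipAt i).apply_symm_apply ε

@[simp] lemma flipAt_apply_self (i : ι) (ε : ι → Bool) : flipAt i ε i = !ε i := by
  simp [flipAt_apply]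

lemma flipAt_apply_of_ne {i j : ι} (h : j ≠ i) (ε : ι → Bool) : flipAt i ε j = ε j := by
  simp [flipAt_apply, h]

lemma walsh_flipAt (i : ι) (S : Finset ι) (ε : ι → Bool) :
    walsh S (flipAt i ε) = (if i ∈ S then -1 else 1) * walsh S ε := by
  split_ifs with hi
  · rw [walsh, walsh, ← mul_prod_erase S _ hi, ← mul_prod_erase S _ hi,
      prod_congr rfl fun j hj => by rw [flipAt_apply_of_ne (ne_of_mem_erase hj)]]
    simp
  · rw [one_mul]
    exact prod_congr rfl fun j hj => by rw [flipAt_apply_of_ne (ne_of_mem_of_not_mem hj hi)]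

end FlipAt

section Fourier

variable [Fintype ι]

lemma sum_walsh_mul_walsh (ε ε' : ι → Bool) :
    ∑ S, walsh S ε * walsh S ε' = if ε = ε' then 2 ^ Fintype.card ι else 0 := by
  simp_rw [walsh, ← prod_mul_distrib]
  rw [← powerset_univ, ← prod_add_one]
  split_ifs with h
  · simp [h, card_univ]
    norm_num
  · obtain ⟨i, hi⟩ := Function.ne_iff.mp h
    refine prod_eq_zero (mem_univ i) ?_
    cases hε : ε i <;> cases hε' : ε' i <;> simp_all

variable [DecidableEq ι]

lemma sum_walsh_eq_zero {S : Finset ι} (hS : S.Nonempty) : ∑ ε, walsh S ε = 0 := by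
  obtain ⟨i, hi⟩ := hS
  have h := Equiv.sum_comp (flipAt i) (walsh S)
  simp only [walsh_flipAt, if_pos hi, neg_one_mul, sum_neg_distrib] at h
  linarith

lemma sum_sign_mul_sign (j k : ι) :
    ∑ ε : ι → Bool, sign (ε j) * sign (ε k) = if j = k then 2 ^ Fintype.card ι else 0 := by
  split_ifs with hjk
  · simp [hjk, card_univ]
  · simpa [walsh, prod_pair hjk] using sum_walsh_eq_zero (insert_nonempty j {k})

/-- Unnormalized: `F = 2⁻ⁿ ∑ S, fourierCoeff F S • walsh S`. -/
def fourierCoeff (F : (ι → Bool) → ℝ) (S : Finset ι) : ℝ := ∑ ε, F ε * walsh S ε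

@[simp] lemma fourierCoeff_empty (F : (ι → Bool) → ℝ) : fourierCoeff F ∅ = ∑ ε, F ε := by
  simp [fourierCoeff, walsh]

theorem sum_fourierCoeff_mul_fourierCoeff (F G : (ι → Bool) → ℝ) :
    ∑ S, fourierCoeff F S * fourierCoeff G S = 2 ^ Fintype.card ι * ∑ ε, F ε * G ε := by
  calc ∑ S, fourierCoeff F S * fourierCoeff G S
      = ∑ ε, ∑ ε', F ε * G ε' * ∑ S, walsh S ε * walsh S ε' := by
        simp only [fourierCoeff, sum_mul_sum]
        simp only [mul_sum]
        rw [sum_comm]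
        refine sum_congr rfl fun ε _ => ?_
        rw [sum_comm]
        exact sum_congr rfl fun _ _ => sum_congr rfl fun _ _ => by ring
    _ = 2 ^ Fintype.card ι * ∑ ε, F ε * G ε := by
        simp [sum_walsh_mul_walsh, mul_sum, mul_comm]

lemma fourierCoeff_eq_zero_of_odd {F : (ι → Bool) → ℝ} (hF : ∀ ε, F (flipAll ε) = F ε)
    {S : Finset ι} (hS : Odd #S) : fourierCoeff F S = 0 := by
  have h := Equiv.sum_comp flipAll fun ε => F ε * walsh S ε
  simp only [hF, walsh_flipAll, hS.neg_one_pow, neg_one_mul, mul_neg, sum_neg_distrib] at h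
  rw [fourierCoeff]
  linarith

lemma fourierCoeff_comp_flipAt (F : (ι → Bool) → ℝ) (i : ι) (S : Finset ι) :
    fourierCoeff (F ∘ flipAt i) S = (if i ∈ S then -1 else 1) * fourierCoeff F S := by
  rw [fourierCoeff, ← Equiv.sum_comp (flipAt i), fourierCoeff, mul_sum]
  refine sum_congr rfl fun ε _ => ?_
  rw [Function.comp_apply, flipAt_flipAt, walsh_flipAt]
  ring

lemma sum_ite_mem_neg_one_one (S : Finset ι) :
    ∑ i, (if i ∈ S then -1 else 1 : ℝ) = Fintype.card ι - 2 * #S := by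
  rw [sum_ite, filter_mem_eq_inter, univ_inter, filter_not, filter_mem_eq_inter, univ_inter,
    sum_const, sum_const, card_sdiff_of_subset (subset_univ S), card_univ]
  simp [Nat.cast_sub (card_le_univ S)]
  ring

theorem sum_card_sub_two_mul_sq_fourierCoeff (F : (ι → Bool) → ℝ) :
    ∑ S, (Fintype.card ι - 2 * #S : ℝ) * fourierCoeff F S ^ 2 =
      2 ^ Fintype.card ι * ∑ ε, (∑ i, F (flipAt i ε)) * F ε := by
  calc ∑ S, (Fintype.card ι - 2 * #S : ℝ) * fourierCoeff F S ^ 2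
      = ∑ i, ∑ S, fourierCoeff (F ∘ flipAt i) S * fourierCoeff F S := by
        simp only [fourierCoeff_comp_flipAt, ← sum_ite_mem_neg_one_one, sum_mul]
        rw [sum_comm]
        exact sum_congr rfl fun _ _ => sum_congr rfl fun _ _ => by ring
    _ = 2 ^ Fintype.card ι * ∑ ε, (∑ i, F (flipAt i ε)) * F ε := by
        simp only [sum_fourierCoeff_mul_fourierCoeff, ← mul_sum, sum_mul, Function.comp_apply]
        rw [sum_comm]

theorem sum_card_sub_one_mul_sq_fourierCoeff_nonpos {F : (ι → Bool) → ℝ} (hF₀ : ∀ ε, 0 ≤ F ε)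
    (hF : ∀ ε, (Fintype.card ι - 2 : ℝ) * F ε ≤ ∑ i, F (flipAt i ε)) :
    ∑ S, (#S - 1 : ℝ) * fourierCoeff F S ^ 2 ≤ 0 := by
  have hmono : (Fintype.card ι - 2 : ℝ) * ∑ S, fourierCoeff F S ^ 2 ≤
      ∑ S, (Fintype.card ι - 2 * #S : ℝ) * fourierCoeff F S ^ 2 := by
    rw [sum_card_sub_two_mul_sq_fourierCoeff]
    simp only [sq, sum_fourierCoeff_mul_fourierCoeff]
    rw [mul_left_comm, mul_sum]
    refine mul_le_mul_of_nonneg_left (sum_le_sum fun ε _ => ?_) (by positivity)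
    rw [← mul_assoc]
    exact mul_le_mul_of_nonneg_right (hF ε) (hF₀ ε)
  have hsplit : ∑ S, (#S - 1 : ℝ) * fourierCoeff F S ^ 2 =
      ((Fintype.card ι - 2 : ℝ) * ∑ S, fourierCoeff F S ^ 2 -
        ∑ S, (Fintype.card ι - 2 * #S : ℝ) * fourierCoeff F S ^ 2) / 2 := by
    rw [mul_sum, ← sum_sub_distrib, sum_div]
    exact sum_congr rfl fun _ _ => by ring
  rw [hsplit]
  linarith

theorem sum_sq_fourierCoeff_le {F : (ι → Bool) → ℝ} (hF₀ : ∀ ε, 0 ≤ F ε)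
    (hF_even : ∀ ε, F (flipAll ε) = F ε)
    (hF : ∀ ε, (Fintype.card ι - 2 : ℝ) * F ε ≤ ∑ i, F (flipAt i ε)) :
    ∑ S, fourierCoeff F S ^ 2 ≤ 2 * fourierCoeff F ∅ ^ 2 := by
  have hterm : ∀ S : Finset ι, fourierCoeff F S ^ 2 ≤
      (#S - 1 : ℝ) * fourierCoeff F S ^ 2 + if S = ∅ then 2 * fourierCoeff F S ^ 2 else 0 := by
    intro S
    rcases Nat.lt_or_ge #S 2 with hS | hS
    · interval_cases hcard : #S
      · simp [card_eq_zero.mp hcard, two_mul]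
      · simp [fourierCoeff_eq_zero_of_odd hF_even (hcard ▸ odd_one)]
    · have : (1 : ℝ) ≤ #S - 1 := by
        have : (2 : ℝ) ≤ #S := by exact_mod_cast hS
        linarith
      rw [if_neg (by rintro rfl; simp at hS)]
      nlinarith [sq_nonneg (fourierCoeff F S)]
  calc ∑ S, fourierCoeff F S ^ 2
      ≤ ∑ S, (#S - 1 : ℝ) * fourierCoeff F S ^ 2 + 2 * fourierCoeff F ∅ ^ 2 := by
        simpa [sum_add_distrib] using sum_le_sum fun S (_ : S ∈ univ) => hterm S
    _ ≤ 2 * fourierCoeff F ∅ ^ 2 := by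
        linarith [sum_card_sub_one_mul_sq_fourierCoeff_nonpos hF₀ hF]

theorem two_pow_card_mul_sum_sq_le {F : (ι → Bool) → ℝ} (hF₀ : ∀ ε, 0 ≤ F ε)
    (hF_even : ∀ ε, F (flipAll ε) = F ε)
    (hF : ∀ ε, (Fintype.card ι - 2 : ℝ) * F ε ≤ ∑ i, F (flipAt i ε)) :
    2 ^ Fintype.card ι * ∑ ε, F ε ^ 2 ≤ 2 * (∑ ε, F ε) ^ 2 := by
  simpa [sq, sum_fourierCoeff_mul_fourierCoeff] using sum_sq_fourierCoeff_le hF₀ hF_even hF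

end Fourier

section SignedSum

variable [Fintype ι] {E : Type*}

def signedSum [AddCommGroup E] [Module ℝ E] (a : ι → E) (ε : ι → Bool) : E :=
  ∑ j, sign (ε j) • a j

lemma signedSum_flipAll [AddCommGroup E] [Module ℝ E] (a : ι → E) (ε : ι → Bool) :
    signedSum a (flipAll ε) = -signedSum a ε := by
  simp [signedSum]

variable [DecidableEq ι]

lemma signedSum_flipAt [AddCommGroup E] [Module ℝ E] (a : ι → E) (i : ι) (ε : ι → Bool) :
    signedSum a (flipAt i ε) = signedSum a ε - (2 * sign (ε i)) • a i := by
  have hterm : ∀ j, sign (flipAt i ε j) • a j =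
      sign (ε j) • a j - if j = i then (2 * sign (ε i)) • a i else 0 := by
    intro j
    by_cases hj : j = i
    · subst hj
      simp only [flipAt_apply_self, sign_not, if_true]
      module
    · simp [flipAt_apply_of_ne hj, hj]
  simp only [signedSum, hterm, sum_sub_distrib, sum_ite_eq', mem_univ, if_true]

lemma sum_signedSum_flipAt [AddCommGroup E] [Module ℝ E] (a : ι → E) (ε : ι → Bool) :
    ∑ i, signedSum a (flipAt i ε) = (Fintype.card ι - 2 : ℝ) • signedSum a ε := by
  simp only [signedSum_flipAt, sum_sub_distrib, sum_const, card_univ, mul_smul, ← smul_sum]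
  rw [← signedSum, sub_smul, Nat.cast_smul_eq_nsmul]

lemma card_sub_two_mul_norm_signedSum_le [NormedAddCommGroup E] [NormedSpace ℝ E]
    (a : ι → E) (ε : ι → Bool) :
    (Fintype.card ι - 2 : ℝ) * ‖signedSum a ε‖ ≤ ∑ i, ‖signedSum a (flipAt i ε)‖ :=
  calc (Fintype.card ι - 2 : ℝ) * ‖signedSum a ε‖
      ≤ ‖(Fintype.card ι - 2 : ℝ) • signedSum a ε‖ := by
        rw [norm_smul, Real.norm_eq_abs]
        exact mul_le_mul_of_nonneg_right (le_abs_self _) (norm_nonneg _)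
    _ = ‖∑ i, signedSum a (flipAt i ε)‖ := by rw [sum_signedSum_flipAt]
    _ ≤ ∑ i, ‖signedSum a (flipAt i ε)‖ := norm_sum_le _ _

lemma sum_norm_signedSum_sq [NormedAddCommGroup E] [InnerProductSpace ℝ E] (a : ι → E) :
    ∑ ε, ‖signedSum a ε‖ ^ 2 = 2 ^ Fintype.card ι * ∑ j, ‖a j‖ ^ 2 :=
  calc ∑ ε, ‖signedSum a ε‖ ^ 2
      = ∑ ε : ι → Bool, ∑ j, ∑ k, sign (ε j) * sign (ε k) * inner ℝ (a j) (a k) := by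
        simp only [← real_inner_self_eq_norm_sq, signedSum, sum_inner, inner_sum,
          real_inner_smul_left, real_inner_smul_right]
        exact sum_congr rfl fun _ _ => sum_congr rfl fun _ _ => sum_congr rfl fun _ _ => by
          rw [real_inner_comm]; ring
    _ = ∑ j, ∑ k, (∑ ε : ι → Bool, sign (ε j) * sign (ε k)) * inner ℝ (a j) (a k) := by
        simp only [sum_mul]
        rw [sum_comm]
        exact sum_congr rfl fun _ _ => sum_comm
    _ = 2 ^ Fintype.card ι * ∑ j, ‖a j‖ ^ 2 := by
        simp [sum_sign_mul_sign, mul_sum]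

theorem sum_norm_sq_le_two_mul_sq_mean_norm_signedSum [NormedAddCommGroup E]
    [InnerProductSpace ℝ E] (a : ι → E) :
    ∑ j, ‖a j‖ ^ 2 ≤ 2 * ((∑ ε, ‖signedSum a ε‖) / 2 ^ Fintype.card ι) ^ 2 := by
  have h := two_pow_card_mul_sum_sq_le (F := fun ε => ‖signedSum a ε‖) (fun _ => norm_nonneg _)
    (fun ε => by simp only [signedSum_flipAll, norm_neg]) (card_sub_two_mul_norm_signedSum_le a)
  rw [sum_norm_signedSum_sq] at h
  rw [div_pow, mul_div_assoc', le_div_iff₀ (by positivity)]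
  linarith

end SignedSum

end BooleanCube

theorem stmt1 (n : ℕ) (a : Fin n → ℂ) :
    (1 / Real.sqrt 2) * Real.sqrt (∑ j, ‖a j‖ ^ 2) ≤
      (1 / 2 ^ n) * ∑ ε : Fin n → Bool, ‖∑ j, (if ε j then (1 : ℂ) else -1) * a j‖ := by
  have hsigned : ∀ ε : Fin n → Bool,
      ∑ j, (if ε j then (1 : ℂ) else -1) * a j = BooleanCube.signedSum a ε := fun ε =>
    sum_congr rfl fun j _ => by cases ε j <;> simp [BooleanCube.sign]
  have h := BooleanCube.sum_norm_sq_le_two_mul_sq_mean_norm_signedSum a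
  simp only [Fintype.card_fin] at h
  simp only [hsigned]
  set m := (∑ ε, ‖BooleanCube.signedSum a ε‖) / 2 ^ n with hm_def
  have hm : 0 ≤ m := by positivity
  calc 1 / √2 * √(∑ j, ‖a j‖ ^ 2)
      ≤ 1 / √2 * (√2 * m) := by
        gcongr
        calc √(∑ j, ‖a j‖ ^ 2) ≤ √(2 * m ^ 2) := Real.sqrt_le_sqrt h
          _ = √2 * m := by rw [Real.sqrt_mul zero_le_two, Real.sqrt_sq hm]
    _ = 1 / 2 ^ n * ∑ ε, ‖BooleanCube.signedSum a ε‖ := by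
        rw [hm_def]
        field_simp
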